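/- arXiv:2010.02382 — 2 statements merged into one kernel-verified Lean document; each statement's English description precedes it below -/
import Mathlib

section
/- Let R = k[x,y,z] (or its localization at the origin) over a field k, and let I = (x, y, z²). Then the k-vector space I/I² has dimension 6, with basis given by the classes of x, y, z², xz, yz, z³. -/
open MvPolynomial

namespace Stmt6Aux

/-- The six exponent vectors of `x, y, z², xz, yz, z³`. -/
noncomputable def mon : Fin 6 → (Fin 3 →₀ ℕ) :=
  ![Finsupp.single 0 1, Finsupp.single 1 1, Finsupp.single 2 2,
    Finsupp.single 0 1 + Finsupp.single 2 1, Finsupp.single 1 1 + Finsupp.single 2 1,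
    Finsupp.single 2 3]

lemma mon0 : mon 0 = Finsupp.single 0 1 := rfl
lemma mon1 : mon 1 = Finsupp.single 1 1 := rfl
lemma mon2 : mon 2 = Finsupp.single 2 2 := rfl
lemma mon3 : mon 3 = Finsupp.single 0 1 + Finsupp.single 2 1 := rfl
lemma mon4 : mon 4 = Finsupp.single 1 1 + Finsupp.single 2 1 := rfl
lemma mon5 : mon 5 = Finsupp.single 2 3 := rfl

/-- computable table of the exponents -/
def mexp : Fin 6 → Fin 3 → ℕ := fun i a =>
  match i.val, a.val with
  | 0, 0 => 1 | 0, 1 => 0 | 0, _ => 0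
  | 1, 0 => 0 | 1, 1 => 1 | 1, _ => 0
  | 2, 0 => 0 | 2, 1 => 0 | 2, _ => 2
  | 3, 0 => 1 | 3, 1 => 0 | 3, _ => 1
  | 4, 0 => 0 | 4, 1 => 1 | 4, _ => 1
  | 5, 0 => 0 | 5, 1 => 0 | 5, _ => 3
  | _, _ => 0

lemma mon_apply (i : Fin 6) (a : Fin 3) : mon i a = mexp i a := by
  fin_cases i <;> fin_cases a <;>
    simp [mon0, mon1, mon2, mon3, mon4, mon5, mexp, Finsupp.single_apply]

lemma mexp_inj : ∀ i j : Fin 6, (∀ a, mexp i a = mexp j a) → i = j := by decide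

lemma mon_injective : Function.Injective mon := by
  intro i j h
  exact mexp_inj i j fun a => by rw [← mon_apply, ← mon_apply, h]

/-- weight with `x,y` of weight 2 and `z` of weight 1 -/
def w (s : Fin 3 →₀ ℕ) : ℕ := 2 * s 0 + 2 * s 1 + s 2

lemma w_add (s t : Fin 3 →₀ ℕ) : w (s + t) = w s + w t := by
  simp [w, Finsupp.add_apply]; ring

lemma w_mon_le (j : Fin 6) : w (mon j) ≤ 3 := by
  have h : ∀ j : Fin 6, 2 * mexp j 0 + 2 * mexp j 1 + mexp j 2 ≤ 3 := by decide
  simpa [w, mon_apply] using h j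

variable {k : Type*} [Field k]

lemma gen_cases {a : MvPolynomial (Fin 3) k}
    (ha : a ∈ ({X 0, X 1, X 2 ^ 2} : Set (MvPolynomial (Fin 3) k))) :
    ∃ s : Fin 3 →₀ ℕ, a = monomial s 1 ∧ 2 ≤ w s := by
  rcases ha with rfl | rfl | rfl
  · exact ⟨Finsupp.single 0 1, by rw [← X_pow_eq_monomial, pow_one],
      by simp [w, Finsupp.single_apply]⟩
  · exact ⟨Finsupp.single 1 1, by rw [← X_pow_eq_monomial, pow_one],
      by simp [w, Finsupp.single_apply]⟩
  · exact ⟨Finsupp.single 2 2, X_pow_eq_monomial, by simp [w, Finsupp.single_apply]⟩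

lemma coeff_sq_zero (j : Fin 6) {p : MvPolynomial (Fin 3) k}
    (hp : p ∈ Ideal.span ({X 0, X 1, X 2 ^ 2} : Set (MvPolynomial (Fin 3) k)) ^ 2) :
    coeff (mon j) p = 0 := by
  rw [pow_two, Ideal.span_mul_span'] at hp
  have key : ∀ r, coeff (mon j) (r * p) = 0 := by
    refine Submodule.span_induction ?_ ?_ ?_ ?_ hp
    · rintro q ⟨a, ha, b, hb, rfl⟩ r
      obtain ⟨s, rfl, hs⟩ := gen_cases ha
      obtain ⟨t, rfl, ht⟩ := gen_cases hb
      dsimp only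
      rw [monomial_mul, one_mul, coeff_mul_monomial']
      rw [if_neg]
      intro hle
      have hw : w s + w t ≤ w (mon j) := by
        have h0 := hle 0
        have h1 := hle 1
        have h2 := hle 2
        have e0 : (s + t) 0 = s 0 + t 0 := Finsupp.add_apply s t 0
        have e1 : (s + t) 1 = s 1 + t 1 := Finsupp.add_apply s t 1
        have e2 : (s + t) 2 = s 2 + t 2 := Finsupp.add_apply s t 2
        simp only [w]
        omega
      have := w_mon_le j
      omega
    · intro r; simp
    · intro x y _ _ hx hy r
      rw [mul_add, coeff_add, hx, hy, add_zero]
    · intro a x _ hx r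
      rw [smul_eq_mul, ← mul_assoc]
      exact hx _
  simpa using key 1

/-- Any polynomial whose coefficients on `1` and `z` vanish lies in `(x, y, z²)`. -/
lemma mem_I_of_coeff (p : MvPolynomial (Fin 3) k)
    (h0 : coeff 0 p = 0) (h1 : coeff (Finsupp.single 2 1) p = 0) :
    p ∈ Ideal.span ({X 0, X 1, X 2 ^ 2} : Set (MvPolynomial (Fin 3) k)) := by
  rw [as_sum p]
  refine Ideal.sum_mem _ ?_
  intro s hs
  have hcs : coeff s p ≠ 0 := mem_support_iff.mp hs
  have hgen : ∀ (t : Fin 3 →₀ ℕ), t ≤ s →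
      (monomial t 1 : MvPolynomial (Fin 3) k) ∈
        Ideal.span ({X 0, X 1, X 2 ^ 2} : Set (MvPolynomial (Fin 3) k)) →
      (monomial s (coeff s p) : MvPolynomial (Fin 3) k) ∈
        Ideal.span ({X 0, X 1, X 2 ^ 2} : Set (MvPolynomial (Fin 3) k)) := by
    intro t hts hmem
    have : (monomial s (coeff s p) : MvPolynomial (Fin 3) k)
        = monomial t 1 * monomial (s - t) (coeff s p) := by
      rw [monomial_mul, one_mul, add_tsub_cancel_of_le hts]
    rw [this]
    exact Ideal.mul_mem_right _ _ hmem
  by_cases hs0 : s 0 ≠ 0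
  · refine hgen (Finsupp.single 0 1) (Finsupp.single_le_iff.mpr (by omega)) ?_
    rw [← X_pow_eq_monomial, pow_one]
    exact Ideal.subset_span (by simp)
  by_cases hs1 : s 1 ≠ 0
  · refine hgen (Finsupp.single 1 1) (Finsupp.single_le_iff.mpr (by omega)) ?_
    rw [← X_pow_eq_monomial, pow_one]
    exact Ideal.subset_span (by simp)
  push_neg at hs0 hs1
  -- now s is a pure power of z
  have hs2 : 2 ≤ s 2 := by
    by_contra hlt
    have h2 : s 2 = 0 ∨ s 2 = 1 := by omega
    rcases h2 with h2 | h2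
    · apply hcs
      have : s = 0 := by
        ext a; fin_cases a <;> simp_all
      rw [this]; exact h0
    · apply hcs
      have : s = Finsupp.single 2 1 := by
        ext a; fin_cases a <;> simp_all [Finsupp.single_apply]
      rw [this]; exact h1
  refine hgen (Finsupp.single 2 2) (Finsupp.single_le_iff.mpr (by omega)) ?_
  rw [← X_pow_eq_monomial]
  exact Ideal.subset_span (by simp)

/-- coefficient extraction as a `k`-linear map to `k⁶` -/
noncomputable def psi : MvPolynomial (Fin 3) k →ₗ[k] (Fin 6 → k) :=
  LinearMap.pi fun j => lcoeff k (mon j)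

noncomputable def phibar (I : Ideal (MvPolynomial (Fin 3) k))
    (h : ∀ u : I, (u : MvPolynomial (Fin 3) k) ∈ I ^ 2 →
      psi (u : MvPolynomial (Fin 3) k) = 0) :
    I.Cotangent →ₗ[k] (Fin 6 → k) :=
  LinearMap.comp
    (Submodule.liftQ ((I • ⊤ : Submodule (MvPolynomial (Fin 3) k) I).restrictScalars k)
      (psi.comp (I.subtype.restrictScalars k))
      (by
        intro u hu
        have hu' : u ∈ LinearMap.ker I.toCotangent := by
          rw [LinearMap.mem_ker]
          exact (Submodule.Quotient.mk_eq_zero _).mpr hu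
        exact h u (I.mem_toCotangent_ker.mp hu')))
    ((Submodule.Quotient.restrictScalarsEquiv k
      ((I • ⊤ : Submodule (MvPolynomial (Fin 3) k) I))).symm.toLinearMap)

lemma phibar_apply (I : Ideal (MvPolynomial (Fin 3) k)) (h) (u : I) :
    phibar I h (I.toCotangent u) = psi (u : MvPolynomial (Fin 3) k) := rfl

end Stmt6Aux

open Stmt6Aux

/-- For `R = k[x,y,z]` and `I = (x, y, z²)`, the `k`-vector space `I/I²` has
dimension 6, with basis the classes of `x, y, z², xz, yz, z³`. -/
theorem stmt_6 (k : Type*) [Field k]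
    (I : Ideal (MvPolynomial (Fin 3) k))
    (hI : I = Ideal.span {X 0, X 1, X 2 ^ 2})
    (v : Fin 6 → I)
    (hv : ((v 0 : MvPolynomial (Fin 3) k) = X 0 ∧ (v 1 : MvPolynomial (Fin 3) k) = X 1 ∧
        (v 2 : MvPolynomial (Fin 3) k) = X 2 ^ 2 ∧
        (v 3 : MvPolynomial (Fin 3) k) = X 0 * X 2 ∧
        (v 4 : MvPolynomial (Fin 3) k) = X 1 * X 2 ∧
        (v 5 : MvPolynomial (Fin 3) k) = X 2 ^ 3)) :
    Module.finrank k I.Cotangent = 6 ∧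
      ∃ b : Module.Basis (Fin 6) k I.Cotangent, ∀ i, b i = I.toCotangent (v i) := by
  obtain ⟨hv0, hv1, hv2, hv3, hv4, hv5⟩ := hv
  -- v i as monomials
  have hX : ∀ n : Fin 3, (X n : MvPolynomial (Fin 3) k) = monomial (Finsupp.single n 1) 1 :=
    fun n => by rw [← X_pow_eq_monomial, pow_one]
  have hvm : ∀ i, (v i : MvPolynomial (Fin 3) k) = monomial (mon i) 1 := by
    intro i
    fin_cases i
    · show (v 0 : MvPolynomial (Fin 3) k) = monomial (mon 0) 1
      rw [hv0, mon0, ← X_pow_eq_monomial, pow_one]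
    · show (v 1 : MvPolynomial (Fin 3) k) = monomial (mon 1) 1
      rw [hv1, mon1, ← X_pow_eq_monomial, pow_one]
    · show (v 2 : MvPolynomial (Fin 3) k) = monomial (mon 2) 1
      rw [hv2, mon2, ← X_pow_eq_monomial]
    · show (v 3 : MvPolynomial (Fin 3) k) = monomial (mon 3) 1
      rw [hv3, mon3, hX, hX, monomial_mul, one_mul]
    · show (v 4 : MvPolynomial (Fin 3) k) = monomial (mon 4) 1
      rw [hv4, mon4, hX, hX, monomial_mul, one_mul]
    · show (v 5 : MvPolynomial (Fin 3) k) = monomial (mon 5) 1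
      rw [hv5, mon5, ← X_pow_eq_monomial]
  have hker : ∀ u : I, (u : MvPolynomial (Fin 3) k) ∈ I ^ 2 →
      psi (u : MvPolynomial (Fin 3) k) = 0 := by
    intro u hu
    have hu2 : (u : MvPolynomial (Fin 3) k) ∈
        Ideal.span ({X 0, X 1, X 2 ^ 2} : Set (MvPolynomial (Fin 3) k)) ^ 2 := by
      rw [← hI]; exact hu
    funext j
    simpa [psi] using coeff_sq_zero j hu2
  set Φ := phibar I hker with hΦdef
  set g : Fin 6 → I.Cotangent := fun i => I.toCotangent (v i) with hg
  -- Φ sends g to the standard basis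
  have hΦg : Φ ∘ g = ⇑(Pi.basisFun k (Fin 6)) := by
    funext i
    funext j
    rw [Function.comp_apply, hg, phibar_apply, hvm i]
    simp only [psi, LinearMap.pi_apply, lcoeff_apply, coeff_monomial, Pi.basisFun_apply]
    by_cases h : i = j
    · subst h; simp
    · rw [if_neg (fun hc => h (mon_injective hc)), Pi.single_apply, if_neg (Ne.symm h)]
  have hind : LinearIndependent k g := by
    apply LinearIndependent.of_comp Φ
    rw [hΦg]
    exact (Pi.basisFun k (Fin 6)).linearIndependent
  -- spanning
  have hmain : ∀ (r : MvPolynomial (Fin 3) k) (i i' : Fin 6),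
      (v i' : MvPolynomial (Fin 3) k) = X 2 * (v i : MvPolynomial (Fin 3) k) →
      r • g i ∈ Submodule.span k (Set.range g) := by
    intro r i i' hii'
    have hgi : g i ∈ Submodule.span k (Set.range g) :=
      Submodule.subset_span (Set.mem_range_self i)
    have hgi' : g i' ∈ Submodule.span k (Set.range g) :=
      Submodule.subset_span (Set.mem_range_self i')
    set r0 := coeff 0 r with hr0
    set r1 := coeff (Finsupp.single 2 1) r with hr1
    have hq : r - C r0 - C r1 * X 2 ∈ I := by
      rw [hI]
      apply mem_I_of_coeff
      · simp [coeff_sub, coeff_C, coeff_C_mul, coeff_X', Finsupp.single_eq_zero,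
          ← hr0, ← hr1]
      · simp [coeff_sub, coeff_C, coeff_C_mul, coeff_X', Finsupp.single_eq_zero,
          ← hr0, ← hr1]
        intro h
        exact absurd (Finsupp.single_eq_zero.mp h.symm) one_ne_zero
    have hdecomp : r • g i = r0 • g i + r1 • g i' := by
      have hXsmul : (X 2 : MvPolynomial (Fin 3) k) • g i = g i' := by
        rw [hg]
        show X 2 • I.toCotangent (v i) = I.toCotangent (v i')
        rw [← map_smul]
        congr 1
        exact Subtype.ext (by rw [hii']; rfl)
      have hsplit : r • g i = (C r0 + C r1 * X 2 + (r - C r0 - C r1 * X 2)) • g i := by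
        congr 1; ring
      rw [hsplit, add_smul, add_smul,
        Ideal.Cotangent.smul_eq_zero_of_mem hq, add_zero, mul_smul, hXsmul]
      congr 1
      · rw [← MvPolynomial.algebraMap_eq, algebraMap_smul]
      · rw [← MvPolynomial.algebraMap_eq, algebraMap_smul]
    rw [hdecomp]
    exact Submodule.add_mem _ (Submodule.smul_mem _ _ hgi) (Submodule.smul_mem _ _ hgi')
  have hspan : ⊤ ≤ Submodule.span k (Set.range g) := by
    rintro ξ -
    obtain ⟨u, rfl⟩ := I.toCotangent_surjective ξ
    obtain ⟨p, hp⟩ := u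
    have hp' := hp
    rw [hI, Ideal.mem_span_insert] at hp'
    obtain ⟨a, z, hz, hpz⟩ := hp'
    rw [Ideal.mem_span_insert] at hz
    obtain ⟨b, z', hz', hzz⟩ := hz
    rw [Ideal.mem_span_singleton'] at hz'
    obtain ⟨c, hc⟩ := hz'
    have hpeq : p = a * X 0 + b * X 1 + c * X 2 ^ 2 := by
      rw [hpz, hzz, ← hc]; ring
    have hsub : (⟨p, hp⟩ : I) = a • v 0 + b • v 1 + c • v 2 := by
      apply Subtype.ext
      push_cast
      rw [hv0, hv1, hv2, hpeq]
      simp [smul_eq_mul]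
    rw [hsub, map_add, map_add, map_smul, map_smul, map_smul]
    refine Submodule.add_mem _ (Submodule.add_mem _ ?_ ?_) ?_
    · exact hmain a 0 3 (by rw [hv3, hv0]; ring)
    · exact hmain b 1 4 (by rw [hv4, hv1]; ring)
    · exact hmain c 2 5 (by rw [hv5, hv2]; ring)
  let b : Module.Basis (Fin 6) k I.Cotangent := Module.Basis.mk hind hspan
  refine ⟨?_, b, fun i => Module.Basis.mk_apply hind hspan i⟩
  rw [Module.finrank_eq_card_basis b, Fintype.card_fin]
end

section
/- In the polynomial ring k[x,y,z,w], the ideal (xy − z², w) ∩ (y, z, w²) equals (w², zw, yw, xy − z²). -/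
open MvPolynomial

lemma aux_div (k : Type*) [Field k] (b : MvPolynomial (Fin 4) k)
    (hb : b * X 3 ∈ Ideal.span {(X 1 : MvPolynomial (Fin 4) k), X 2, X 3 ^ 2}) :
    b ∈ Ideal.span {(X 1 : MvPolynomial (Fin 4) k), X 2, X 3} := by
  have hset : ({X 1, X 2, X 3 ^ 2} : Set (MvPolynomial (Fin 4) k)) =
      (fun s => monomial s (1 : k)) ''
        {Finsupp.single 1 1, Finsupp.single 2 1, Finsupp.single 3 2} := by
    simp only [Set.image_insert_eq, Set.image_singleton, ← X_pow_eq_monomial]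
    simp [X]
  rw [hset, mem_ideal_span_monomial_image] at hb
  have hXset : ({X 1, X 2, X 3} : Set (MvPolynomial (Fin 4) k)) =
      MvPolynomial.X '' ({1, 2, 3} : Set (Fin 4)) := by
    simp [Set.image_insert_eq]
  rw [hXset, mem_ideal_span_X_image]
  intro m hm
  have hm' : m + Finsupp.single 3 1 ∈ (b * X 3).support := by
    rw [support_mul_X]
    exact Finset.mem_map.2 ⟨m, hm, rfl⟩
  obtain ⟨si, hsi, hle⟩ := hb _ hm'
  rcases hsi with h | h | h
  · refine ⟨1, by simp, ?_⟩
    subst h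
    have := Finsupp.single_le_iff.1 hle
    simp [Finsupp.add_apply, Finsupp.single_apply, show (3:Fin 4) ≠ 1 by decide, show (3:Fin 4) ≠ 2 by decide] at this
    omega
  · refine ⟨2, by simp, ?_⟩
    subst h
    have := Finsupp.single_le_iff.1 hle
    simp [Finsupp.add_apply, Finsupp.single_apply, show (3:Fin 4) ≠ 1 by decide, show (3:Fin 4) ≠ 2 by decide] at this
    omega
  · refine ⟨3, by simp, ?_⟩
    rw [Set.mem_singleton_iff] at h
    subst h
    have := Finsupp.single_le_iff.1 hle
    simp [Finsupp.add_apply, Finsupp.single_apply, show (3:Fin 4) ≠ 1 by decide, show (3:Fin 4) ≠ 2 by decide] at this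
    omega

/-- In `k[x,y,z,w]`, `(xy - z², w) ∩ (y, z, w²) = (w², zw, yw, xy - z²)`. -/
theorem stmt_10 (k : Type*) [Field k] :
    (Ideal.span {(X 0 * X 1 - X 2 ^ 2 : MvPolynomial (Fin 4) k), X 3} ⊓
        Ideal.span {(X 1 : MvPolynomial (Fin 4) k), X 2, X 3 ^ 2}) =
      Ideal.span {X 3 ^ 2, X 2 * X 3, X 1 * X 3, X 0 * X 1 - X 2 ^ 2} := by
  apply le_antisymm
  · intro f hf
    obtain ⟨hf1, hf2⟩ := Ideal.mem_inf.1 hf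
    obtain ⟨a, b, hab⟩ := Ideal.mem_span_pair.1 hf1
    have hconic : (X 0 * X 1 - X 2 ^ 2 : MvPolynomial (Fin 4) k) ∈
        Ideal.span {(X 1 : MvPolynomial (Fin 4) k), X 2, X 3 ^ 2} := by
      refine sub_mem ?_ ?_
      · exact Ideal.mul_mem_left _ _ (Ideal.subset_span (by simp))
      · rw [sq]
        exact Ideal.mul_mem_left _ _ (Ideal.subset_span (by simp))
    have hbX : b * X 3 ∈ Ideal.span {(X 1 : MvPolynomial (Fin 4) k), X 2, X 3 ^ 2} := by
      have : b * X 3 = f - a * (X 0 * X 1 - X 2 ^ 2) := by rw [← hab]; ring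
      rw [this]
      exact sub_mem hf2 (Ideal.mul_mem_left _ _ hconic)
    have hb := aux_div k b hbX
    obtain ⟨r1, rest, hrest, hb1⟩ := Ideal.mem_span_insert.1 hb
    obtain ⟨r2, rest2, hrest2, hb2⟩ := Ideal.mem_span_insert.1 hrest
    obtain ⟨r3, hr3⟩ := Ideal.mem_span_singleton'.1 hrest2
    have hfeq : f = a * (X 0 * X 1 - X 2 ^ 2) + r1 * (X 1 * X 3) + r2 * (X 2 * X 3)
        + r3 * X 3 ^ 2 := by
      rw [← hab, hb1, hb2, ← hr3]; ring
    rw [hfeq]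
    refine add_mem (add_mem (add_mem ?_ ?_) ?_) ?_
    · exact Ideal.mul_mem_left _ _ (Ideal.subset_span (by simp))
    · exact Ideal.mul_mem_left _ _ (Ideal.subset_span (by simp))
    · exact Ideal.mul_mem_left _ _ (Ideal.subset_span (by simp))
    · exact Ideal.mul_mem_left _ _ (Ideal.subset_span (by simp))
  · rw [Ideal.span_le]
    rintro p (rfl | rfl | rfl | rfl) <;> rw [SetLike.mem_coe, Ideal.mem_inf] <;> constructor
    · rw [sq]
      exact Ideal.mul_mem_left _ _ (Ideal.subset_span (by simp))
    · exact Ideal.subset_span (by simp)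
    · exact Ideal.mul_mem_left _ _ (Ideal.subset_span (by simp))
    · exact Ideal.mul_mem_right _ _ (Ideal.subset_span (by simp))
    · exact Ideal.mul_mem_left _ _ (Ideal.subset_span (by simp))
    · exact Ideal.mul_mem_right _ _ (Ideal.subset_span (by simp))
    · exact Ideal.subset_span (by simp)
    · refine sub_mem (Ideal.mul_mem_left _ _ (Ideal.subset_span (by simp))) ?_
      rw [sq]
      exact Ideal.mul_mem_left _ _ (Ideal.subset_span (by simp))
end
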